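/- In the monopoly pricing problem with Θ = [0,∞), let λ > 0, v_λ(θ) = λ·1[θ ≥ λ], and Π the set of probability measures with median λ (π([0,λ]) ≥ 1/2 and π([λ,∞)) ≥ 1/2). Then the payoff guarantee of v_λ over Π is not robust: there is a sequence (π_n) of probability measures converging weakly to the measure (δ_0 + δ_λ)/2 ∈ Π such that ∫ v_λ dπ_n = 0 for all n, while inf_{π ∈ Π} ∫ v_λ dπ = λ/2 > 0. -/

import Mathlib

open MeasureTheory Filter Topology

open scoped NNReal ENNReal

/-- Convex combination `l•μ + (1-l)•ν` of two probability measures. -/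
noncomputable def mix {Θ : Type*} [MeasurableSpace Θ] (l : ℝ) (hl0 : 0 ≤ l) (hl1 : l ≤ 1)
    (μ ν : ProbabilityMeasure Θ) : ProbabilityMeasure Θ :=
  ⟨ENNReal.ofReal l • (μ : Measure Θ) + ENNReal.ofReal (1 - l) • (ν : Measure Θ), by
    constructor
    simp only [Measure.coe_add, Measure.coe_smul, Pi.add_apply, Pi.smul_apply,
      measure_univ, smul_eq_mul, mul_one]
    rw [← ENNReal.ofReal_add hl0 (by linarith), add_sub_cancel, ENNReal.ofReal_one]⟩

/-- Dirac measure as a probability measure. -/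
noncomputable def diracP {Θ : Type*} [MeasurableSpace Θ] (θ : Θ) : ProbabilityMeasure Θ :=
  ⟨Measure.dirac θ, inferInstance⟩


/-- Revenue function of posted price `p` in the monopoly selling problem on `Θ = [0,∞)`. -/
noncomputable def postedRev (p : ℝ≥0) : ℝ≥0 → ℝ :=
  fun θ => if p ≤ θ then (p : ℝ) else 0

/-- Ambiguity set of all valuation distributions on `[0,∞)` with median `lam`. -/
def medianSet (lam : ℝ≥0) : Set (ProbabilityMeasure ℝ≥0) :=
  {π | 1/2 ≤ (π : Measure ℝ≥0) (Set.Iic lam) ∧ 1/2 ≤ (π : Measure ℝ≥0) (Set.Ici lam)}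

lemma mix_half_coe (a b : ℝ≥0) :
    (mix (1/2) (by norm_num) (by norm_num) (diracP a) (diracP b) : Measure ℝ≥0)
      = ENNReal.ofReal (1/2) • Measure.dirac a + ENNReal.ofReal (1/2) • Measure.dirac b := by
  simp only [mix, diracP]
  norm_num

lemma integrable_smul_dirac (f : ℝ≥0 → ℝ) (hf : Measurable f) (a : ℝ≥0) :
    Integrable f (ENNReal.ofReal (1/2) • Measure.dirac a) := by
  refine Integrable.smul_measure ?_ ENNReal.ofReal_ne_top
  refine ⟨hf.aestronglyMeasurable, ?_⟩
  rw [HasFiniteIntegral, lintegral_dirac]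
  exact ENNReal.coe_lt_top

lemma integral_mix_half (f : ℝ≥0 → ℝ) (hf : Measurable f) (a b : ℝ≥0) :
    ∫ θ, f θ ∂(mix (1/2) (by norm_num) (by norm_num) (diracP a) (diracP b) : Measure ℝ≥0)
      = (f a + f b) / 2 := by
  rw [mix_half_coe,
    integral_add_measure (integrable_smul_dirac f hf a) (integrable_smul_dirac f hf b),
    integral_smul_measure, integral_smul_measure, integral_dirac, integral_dirac,
    ENNReal.toReal_ofReal (by norm_num)]
  simp only [smul_eq_mul]
  ring

lemma postedRev_measurable (p : ℝ≥0) : Measurable (postedRev p) := by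
  have : postedRev p = (Set.Ici p).indicator (fun _ => (p : ℝ)) := by
    funext θ
    simp [postedRev, Set.indicator, Set.mem_Ici]
  rw [this]
  exact measurable_const.indicator measurableSet_Ici

lemma integral_postedRev (lam : ℝ≥0) (π : ProbabilityMeasure ℝ≥0) :
    ∫ θ, postedRev lam θ ∂(π : Measure ℝ≥0)
      = ((π : Measure ℝ≥0) (Set.Ici lam)).toReal * lam := by
  have h : postedRev lam = (Set.Ici lam).indicator (fun _ => (lam : ℝ)) := by
    funext θ
    simp [postedRev, Set.indicator, Set.mem_Ici]
  rw [h, integral_indicator_const _ measurableSet_Ici, smul_eq_mul]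
  rfl

lemma lower_bound (lam : ℝ≥0) {π : ProbabilityMeasure ℝ≥0} (hπ : π ∈ medianSet lam) :
    (lam : ℝ) / 2 ≤ ∫ θ, postedRev lam θ ∂(π : Measure ℝ≥0) := by
  rw [integral_postedRev]
  have h2 : (1/2 : ℝ) ≤ ((π : Measure ℝ≥0) (Set.Ici lam)).toReal := by
    have := ENNReal.toReal_mono (measure_ne_top _ _) hπ.2
    simpa using this
  have hl : (0:ℝ) ≤ (lam : ℝ) := lam.coe_nonneg
  nlinarith [h2, hl]

/-- The revenue guarantee `lam/2` of the posted price `lam` over the median-`lam`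
ambiguity set is not robust: a sequence of priors converges weakly to `(δ₀ + δ_lam)/2`, a member
of the ambiguity set, while yielding zero revenue. -/
theorem stmt11 (lam : ℝ≥0) (hlam : 0 < lam) :
    ∃ πs : ℕ → ProbabilityMeasure ℝ≥0,
      Tendsto πs atTop
        (𝓝 (mix (1/2) (by norm_num) (by norm_num) (diracP 0) (diracP lam))) ∧
      mix (1/2) (by norm_num) (by norm_num) (diracP 0) (diracP lam) ∈ medianSet lam ∧
      (∀ n, ∫ θ, postedRev lam θ ∂(πs n : Measure ℝ≥0) = 0) ∧
      sInf ((fun π : ProbabilityMeasure ℝ≥0 =>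
        ∫ θ, postedRev lam θ ∂(π : Measure ℝ≥0)) '' medianSet lam) = (lam : ℝ) / 2 ∧
      0 < (lam : ℝ) / 2 := by
  set θn : ℕ → ℝ≥0 := fun n => lam * ((n : ℝ≥0) / (n + 1)) with hθn
  have hθn_lt : ∀ n, θn n < lam := by
    intro n
    have h1 : ((n : ℝ≥0) / (n + 1)) < 1 := by
      rw [div_lt_one (by positivity)]
      exact lt_add_of_pos_right _ one_pos
    calc θn n < lam * 1 := by
          exact mul_lt_mul_of_pos_left h1 hlam
      _ = lam := mul_one lam
  have hθn_tendsto : Tendsto θn atTop (𝓝 lam) := by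
    have h1 : Tendsto (fun n : ℕ => ((n : ℝ≥0) / (n + 1))) atTop (𝓝 1) := by
      rw [← NNReal.tendsto_coe]
      push_cast
      exact tendsto_natCast_div_add_atTop (1 : ℝ)
    have := h1.const_mul lam
    simpa using this
  refine ⟨fun n => mix (1/2) (by norm_num) (by norm_num) (diracP 0) (diracP (θn n)),
    ?_, ?_, ?_, ?_, ?_⟩
  · rw [ProbabilityMeasure.tendsto_iff_forall_integral_tendsto]
    intro f
    have hfm : Measurable (f : ℝ≥0 → ℝ) := f.continuous.measurable
    simp only [integral_mix_half _ hfm]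
    have : Tendsto (fun n => f (θn n)) atTop (𝓝 (f lam)) :=
      (f.continuous.tendsto lam).comp hθn_tendsto
    exact ((this.const_add (f 0)).div_const 2)
  · constructor
    · rw [mix_half_coe]
      simp only [Measure.coe_add, Measure.coe_smul, Pi.add_apply, Pi.smul_apply, smul_eq_mul]
      rw [Measure.dirac_apply_of_mem (Set.mem_Iic.mpr (zero_le : (0:ℝ≥0) ≤ lam)),
        Measure.dirac_apply_of_mem (Set.mem_Iic.mpr le_rfl)]
      rw [mul_one, ← ENNReal.ofReal_add (by norm_num) (by norm_num)]
      norm_num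
    · rw [mix_half_coe]
      simp only [Measure.coe_add, Measure.coe_smul, Pi.add_apply, Pi.smul_apply, smul_eq_mul]
      rw [Measure.dirac_apply_of_mem (Set.mem_Ici.mpr le_rfl), mul_one]
      have h12 : (1/2 : ℝ≥0∞) = ENNReal.ofReal (1/2) := by
        rw [ENNReal.ofReal_div_of_pos (by norm_num)]
        norm_num
      rw [← h12]
      exact le_add_self
  · intro n
    rw [integral_mix_half _ (postedRev_measurable lam)]
    have h0 : postedRev lam 0 = 0 := by
      simp [postedRev, hlam.ne']
    have h1 : postedRev lam (θn n) = 0 := by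
      simp [postedRev, not_le.mpr (hθn_lt n)]
    rw [h0, h1]
    norm_num
  · have hmem : (lam : ℝ) / 2 ∈ ((fun π : ProbabilityMeasure ℝ≥0 =>
        ∫ θ, postedRev lam θ ∂(π : Measure ℝ≥0)) '' medianSet lam) := by
      refine ⟨mix (1/2) (by norm_num) (by norm_num) (diracP 0) (diracP lam), ?_, ?_⟩
      · constructor
        · rw [mix_half_coe]
          simp only [Measure.coe_add, Measure.coe_smul, Pi.add_apply, Pi.smul_apply, smul_eq_mul]
          rw [Measure.dirac_apply_of_mem (Set.mem_Iic.mpr (zero_le : (0:ℝ≥0) ≤ lam)),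
            Measure.dirac_apply_of_mem (Set.mem_Iic.mpr le_rfl)]
          rw [mul_one, ← ENNReal.ofReal_add (by norm_num) (by norm_num)]
          norm_num
        · rw [mix_half_coe]
          simp only [Measure.coe_add, Measure.coe_smul, Pi.add_apply, Pi.smul_apply, smul_eq_mul]
          rw [Measure.dirac_apply_of_mem (Set.mem_Ici.mpr le_rfl), mul_one]
          have h12 : (1/2 : ℝ≥0∞) = ENNReal.ofReal (1/2) := by
            rw [ENNReal.ofReal_div_of_pos (by norm_num)]
            norm_num
          rw [← h12]
          exact le_add_self
      · show ∫ θ, postedRev lam θ ∂((mix (1/2) (by norm_num) (by norm_num) (diracP 0)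
            (diracP lam)) : Measure ℝ≥0) = (lam : ℝ) / 2
        rw [integral_mix_half _ (postedRev_measurable lam)]
        have h0 : postedRev lam 0 = 0 := by simp [postedRev, hlam.ne']
        have h1 : postedRev lam lam = (lam : ℝ) := by simp [postedRev]
        rw [h0, h1, zero_add]
    refine le_antisymm ?_ ?_
    · refine csInf_le ⟨(lam : ℝ)/2, ?_⟩ hmem
      rintro x ⟨π, hπ, rfl⟩
      exact lower_bound lam hπ
    · refine le_csInf ⟨_, hmem⟩ ?_
      rintro x ⟨π, hπ, rfl⟩
      exact lower_bound lam hπ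
  · positivity
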